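/- arXiv:1010.4654 — 5 statements merged into one kernel-verified Lean document; each statement's English description precedes it below -/
import Mathlib

section
/- For every function f meromorphic on the open unit disk 𝔻 one has inf_{z ∈ 𝔻} f^#(z) ≤ 1/2. -/
/-!
Suppose `f^# ≥ c` on the disk, and fix `0 < b, t < 1`. The functions
`w_k(z) = k / (b (1 + k² |z|²))`, i.e. `1/b` times the spherical derivative of `z ↦ k z`, vanish
for `k = 0` and exceed `f^#` at `0` for large `k`; so for some `k > 0` the graph of `w_k` touches
that of `f^#` from below on `|z| ≤ t`. The contact point cannot be interior: `u = log f^#` solves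
`Δu = -4 e^{2u}` and `v = log w_k` solves `Δv = -4 b² e^{2v}`, so `Δ(u - v) < 0` where `u = v`,
contradicting a minimum of `u - v`. On `|z| = t` we have `w_k ≤ 1/(2bt)`, hence `c ≤ 1/(2bt)`,
and `b, t → 1` gives `c ≤ 1/2`.
-/

open Complex Metric Set Filter Topology
open scoped Classical

/-- The spherical derivative of a meromorphic function: `|f'|/(1+|f|²)` at
points where `f` is analytic (finite), and `(1/f)^#` at poles. -/
noncomputable def sphDeriv (f : ℂ → ℂ) (z : ℂ) : ℝ :=
  if AnalyticAt ℂ f z then ‖deriv f z‖ / (1 + ‖f z‖ ^ 2)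
  else ‖deriv (fun w => (f w)⁻¹) z‖ / (1 + ‖(f z)⁻¹‖ ^ 2)

/-- `f` is meromorphic on `D`, normalized so that at every non-analytic point
(i.e. pole) the value of `f` is `0` and the reciprocal `1/f` is analytic
(it is the analytic extension, vanishing at the pole). -/
def MeromorphicNiceOn (f : ℂ → ℂ) (D : Set ℂ) : Prop :=
  MeromorphicOn f D ∧
    ∀ z ∈ D, ¬ AnalyticAt ℂ f z → f z = 0 ∧ AnalyticAt ℂ (fun w => (f w)⁻¹) z

/-- The chordal (spherical) distance on the Riemann sphere `ℂ ∪ {∞}`. -/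
noncomputable def chordalDist : OnePoint ℂ → OnePoint ℂ → ℝ
  | Option.some z, Option.some w =>
      ‖z - w‖ / (Real.sqrt (1 + ‖z‖ ^ 2) * Real.sqrt (1 + ‖w‖ ^ 2))
  | Option.some z, Option.none => 1 / Real.sqrt (1 + ‖z‖ ^ 2)
  | Option.none, Option.some w => 1 / Real.sqrt (1 + ‖w‖ ^ 2)
  | Option.none, Option.none => 0

/-- A meromorphic function viewed as a map into the Riemann sphere: at
non-analytic points (poles) the value is `∞`. -/
noncomputable def spherify (f : ℂ → ℂ) (z : ℂ) : OnePoint ℂ :=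
  if AnalyticAt ℂ f z then (f z : OnePoint ℂ) else OnePoint.infty

/-- Locally uniform convergence on `D` with respect to the chordal metric. -/
def SphTendstoLocallyUniformlyOn (F : ℕ → ℂ → OnePoint ℂ) (g : ℂ → OnePoint ℂ)
    (D : Set ℂ) : Prop :=
  ∀ ε : ℝ, 0 < ε → ∀ z ∈ D, ∃ t ∈ 𝓝[D] z,
    ∀ᶠ n in atTop, ∀ w ∈ t, chordalDist (F n w) (g w) < ε

/-- A family of meromorphic functions is normal on `D` if every sequence has a
subsequence converging locally uniformly on `D` with respect to the spherical
metric (the limit may take the value `∞`, e.g. be the constant `∞`). -/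
def SphNormalOn (𝓕 : Set (ℂ → ℂ)) (D : Set ℂ) : Prop :=
  ∀ F : ℕ → ℂ → ℂ, (∀ n, F n ∈ 𝓕) →
    ∃ φ : ℕ → ℕ, StrictMono φ ∧ ∃ g : ℂ → OnePoint ℂ,
      SphTendstoLocallyUniformlyOn (fun n => spherify (F (φ n))) g D

section SecondDeriv

variable {E : Type*} [NormedAddCommGroup E] [NormedSpace ℝ E]

def HasSecondDerivAt (φ : ℝ → E) (a : E) (x : ℝ) : Prop :=
  (∀ᶠ y in 𝓝 x, DifferentiableAt ℝ φ y) ∧ HasDerivAt (deriv φ) a x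

namespace HasSecondDerivAt

variable {φ ψ φ' : ℝ → E} {a b : E} {x : ℝ}

theorem of_eventually (hφ : ∀ᶠ y in 𝓝 x, HasDerivAt φ (φ' y) y) (hφ' : HasDerivAt φ' a x) :
    HasSecondDerivAt φ a x :=
  ⟨hφ.mono fun _ h => h.differentiableAt,
    hφ'.congr_of_eventuallyEq (hφ.mono fun _ h => h.deriv)⟩

theorem congr_of_eventuallyEq (h : HasSecondDerivAt φ a x) (hψ : ψ =ᶠ[𝓝 x] φ) :
    HasSecondDerivAt ψ a x :=
  ⟨(h.1.and hψ.eventuallyEq_nhds).mono fun _ h => h.1.congr_of_eventuallyEq h.2,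
    h.2.congr_of_eventuallyEq hψ.deriv⟩

theorem sub (hφ : HasSecondDerivAt φ a x) (hψ : HasSecondDerivAt ψ b x) :
    HasSecondDerivAt (fun y => φ y - ψ y) (a - b) x :=
  of_eventually ((hφ.1.and hψ.1).mono fun _ h => h.1.hasDerivAt.sub h.2.hasDerivAt)
    (hφ.2.sub hψ.2)

theorem continuousLinearMap_comp {F : Type*} [NormedAddCommGroup F] [NormedSpace ℝ F]
    (L : E →L[ℝ] F) (h : HasSecondDerivAt φ a x) :
    HasSecondDerivAt (fun y => L (φ y)) (L a) x :=
  of_eventually (h.1.mono fun y hy => L.hasFDerivAt.comp_hasDerivAt y hy.hasDerivAt)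
    (L.hasFDerivAt.comp_hasDerivAt x h.2)

theorem log_one_add_norm_sq {E : Type*} [NormedAddCommGroup E] [InnerProductSpace ℝ E]
    {H : ℝ → E} {H' A : E} (h : HasSecondDerivAt H A x) (h' : HasDerivAt H H' x) :
    HasSecondDerivAt (fun y => Real.log (1 + ‖H y‖ ^ 2))
      (2 * (‖H'‖ ^ 2 + inner ℝ (H x) A) / (1 + ‖H x‖ ^ 2)
        - (2 * inner ℝ (H x) H') ^ 2 / (1 + ‖H x‖ ^ 2) ^ 2) x := by
  have hN : ∀ y, 1 + ‖H y‖ ^ 2 ≠ 0 := fun y => by positivity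
  refine of_eventually (φ' := fun y => 2 * inner ℝ (H y) (deriv H y) / (1 + ‖H y‖ ^ 2))
    (h.1.mono fun y hy => (hy.hasDerivAt.norm_sq.const_add 1).log (hN y)) ?_
  refine (((h'.inner ℝ h.2).const_mul 2).div (h'.norm_sq.const_add 1) (hN x)).congr_deriv ?_
  rw [h'.deriv, real_inner_self_eq_norm_sq]
  field_simp
  ring

end HasSecondDerivAt

theorem IsLocalMin.nonneg_of_hasSecondDerivAt {φ : ℝ → ℝ} {a x : ℝ} (hmin : IsLocalMin φ x)
    (h : HasSecondDerivAt φ a x) : 0 ≤ a := by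
  by_contra! ha
  have hmax : IsLocalMax φ x :=
    isLocalMax_of_deriv_deriv_neg (h.2.deriv ▸ ha) hmin.deriv_eq_zero
      h.1.self_of_nhds.continuousAt
  have hconst : φ =ᶠ[𝓝 x] fun _ => φ x := (hmin.and hmax).mono fun _ hy => le_antisymm hy.2 hy.1
  have hderiv : deriv φ =ᶠ[𝓝 x] fun _ => 0 := by simpa using hconst.deriv
  exact ha.ne (h.2.unique ((hasDerivAt_const x 0).congr_of_eventuallyEq hderiv))

end SecondDeriv

theorem tendsto_line (z e : ℂ) : Tendsto (fun s : ℝ => z + s * e) (𝓝 0) (𝓝 z) := by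
  have hc : Continuous fun s : ℝ => z + s * e := by fun_prop
  simpa using hc.tendsto 0

theorem HasDerivAt.comp_line {F : ℂ → ℂ} {F' z e : ℂ} {s : ℝ} (h : HasDerivAt F F' (z + s * e)) :
    HasDerivAt (fun t : ℝ => F (z + t * e)) (F' * e) s := by
  have hline : HasDerivAt (fun w : ℂ => z + w * e) e s := by
    simpa using ((hasDerivAt_id (s : ℂ)).mul_const e).const_add z
  simpa [mul_comm] using (h.comp (s : ℂ) hline).comp_ofReal

theorem AnalyticAt.hasSecondDerivAt_line {F : ℂ → ℂ} {z : ℂ} (hF : AnalyticAt ℂ F z) (e : ℂ) :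
    HasSecondDerivAt (fun s : ℝ => F (z + s * e)) (deriv (deriv F) z * e ^ 2) 0 := by
  refine .of_eventually ((tendsto_line z e).eventually hF.eventually_analyticAt |>.mono
    fun s hs => hs.differentiableAt.hasDerivAt.comp_line) ?_
  have hd : HasDerivAt (deriv F) (deriv (deriv F) z) (z + ((0 : ℝ) : ℂ) * e) := by
    simpa using hF.deriv.differentiableAt.hasDerivAt
  simpa [sq, mul_assoc] using hd.comp_line.mul_const e

def HasLaplacianAt (φ : ℂ → ℝ) (A : ℝ) (z : ℂ) : Prop :=
  ∃ a b : ℝ, HasSecondDerivAt (fun s : ℝ => φ (z + s)) a 0 ∧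
    HasSecondDerivAt (fun s : ℝ => φ (z + s * I)) b 0 ∧ a + b = A

namespace HasLaplacianAt

variable {φ ψ : ℂ → ℝ} {A B : ℝ} {z : ℂ}

theorem of_lines {a : ℂ → ℝ} (h : ∀ e, HasSecondDerivAt (fun s : ℝ => φ (z + s * e)) (a e) 0) :
    HasLaplacianAt φ (a 1 + a I) z :=
  ⟨a 1, a I, by simpa using h 1, h I, rfl⟩

theorem congr_of_eventuallyEq (h : HasLaplacianAt φ A z) (hψ : ψ =ᶠ[𝓝 z] φ) :
    HasLaplacianAt ψ A z := by
  obtain ⟨a, b, ha, hb, rfl⟩ := h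
  refine ⟨a, b, ha.congr_of_eventuallyEq ?_, hb.congr_of_eventuallyEq ?_, rfl⟩
  · have := (tendsto_line z 1).eventually hψ
    simp only [mul_one] at this
    exact this
  · exact (tendsto_line z I).eventually hψ

theorem sub (hφ : HasLaplacianAt φ A z) (hψ : HasLaplacianAt ψ B z) :
    HasLaplacianAt (fun w => φ w - ψ w) (A - B) z := by
  obtain ⟨a, b, ha, hb, rfl⟩ := hφ
  obtain ⟨a', b', ha', hb', rfl⟩ := hψ
  exact ⟨a - a', b - b', ha.sub ha', hb.sub hb', by ring⟩

end HasLaplacianAt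

theorem IsLocalMin.nonneg_of_hasLaplacianAt {φ : ℂ → ℝ} {A : ℝ} {z : ℂ} (hmin : IsLocalMin φ z)
    (h : HasLaplacianAt φ A z) : 0 ≤ A := by
  obtain ⟨a, b, ha, hb, rfl⟩ := h
  have hline : ∀ e : ℂ, IsLocalMin (fun s : ℝ => φ (z + s * e)) 0 := fun e => by
    have hmin' : IsLocalMin φ (z + ((0 : ℝ) : ℂ) * e) := by simpa using hmin
    exact hmin'.comp_continuous (g := fun s : ℝ => z + s * e) (by fun_prop)
  exact add_nonneg ((hline 1).nonneg_of_hasSecondDerivAt (by simpa using ha))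
    ((hline I).nonneg_of_hasSecondDerivAt hb)

theorem AnalyticAt.hasLaplacianAt_re {F : ℂ → ℂ} {z : ℂ} (hF : AnalyticAt ℂ F z) :
    HasLaplacianAt (fun w => (F w).re) 0 z := by
  have h := HasLaplacianAt.of_lines (φ := fun w => (F w).re) (z := z)
    fun e => (hF.hasSecondDerivAt_line e).continuousLinearMap_comp reCLM
  simpa using h

theorem AnalyticAt.hasLaplacianAt_log_norm {F : ℂ → ℂ} {z : ℂ} (hF : AnalyticAt ℂ F z)
    (hz : F z ≠ 0) : HasLaplacianAt (fun w => Real.log ‖F w‖) 0 z := by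
  -- `log ‖F‖` is locally the real part of a branch of `log F`.
  have hG : AnalyticAt ℂ (fun w => Complex.log (F w / F z) + (Real.log ‖F z‖ : ℂ)) z :=
    ((hF.div analyticAt_const hz).clog (by simp [hz])).add analyticAt_const
  refine hG.hasLaplacianAt_re.congr_of_eventuallyEq ?_
  filter_upwards [hF.continuousAt.eventually_ne hz] with w hw
  simp [log_re, Real.log_div (norm_ne_zero_iff.2 hw) (norm_ne_zero_iff.2 hz)]

theorem AnalyticAt.hasLaplacianAt_log_one_add_norm_sq {h : ℂ → ℂ} {z : ℂ}
    (hh : AnalyticAt ℂ h z) :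
    HasLaplacianAt (fun w => Real.log (1 + ‖h w‖ ^ 2))
      (4 * (‖deriv h z‖ / (1 + ‖h z‖ ^ 2)) ^ 2) z := by
  have hd : ∀ e : ℂ, HasDerivAt (fun s : ℝ => h (z + s * e)) (deriv h z * e) 0 := fun e => by
    have : HasDerivAt h (deriv h z) (z + ((0 : ℝ) : ℂ) * e) := by
      simpa using hh.differentiableAt.hasDerivAt
    exact this.comp_line
  have H := HasLaplacianAt.of_lines (φ := fun w => Real.log (1 + ‖h w‖ ^ 2)) (z := z)
    fun e => (hh.hasSecondDerivAt_line e).log_one_add_norm_sq (hd e)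
  convert H using 1
  have hN : 0 < 1 + ‖h z‖ ^ 2 := by positivity
  simp only [ofReal_zero, zero_mul, add_zero, Complex.inner, one_pow, mul_one, I_sq, mul_neg,
    norm_mul, norm_I, mul_re, mul_im, conj_re, conj_im, neg_re, neg_im, I_re, I_im, div_pow,
    Complex.sq_norm, normSq_apply] at hN ⊢
  field_simp
  ring

theorem sphDeriv_nonneg (f : ℂ → ℂ) (z : ℂ) : 0 ≤ sphDeriv f z := by
  unfold sphDeriv
  split <;> positivity

theorem AnalyticAt.sphDeriv_eq {f : ℂ → ℂ} {z : ℂ} (hf : AnalyticAt ℂ f z) :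
    sphDeriv f z = ‖deriv f z‖ / (1 + ‖f z‖ ^ 2) :=
  if_pos hf

theorem AnalyticAt.continuousAt_sphDeriv {f : ℂ → ℂ} {z : ℂ} (hf : AnalyticAt ℂ f z) :
    ContinuousAt (sphDeriv f) z := by
  have hN : 1 + ‖f z‖ ^ 2 ≠ 0 := by positivity
  exact (hf.deriv.continuousAt.norm.div (continuousAt_const.add (hf.continuousAt.norm.pow 2))
    hN).congr (hf.eventually_analyticAt.mono fun _ hw => hw.sphDeriv_eq.symm)

theorem AnalyticAt.sphDeriv_inv {f : ℂ → ℂ} {z : ℂ} (hf : AnalyticAt ℂ f z) (hz : f z ≠ 0) :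
    sphDeriv (fun w => (f w)⁻¹) z = sphDeriv f z := by
  have hinv : AnalyticAt ℂ (fun w => (f w)⁻¹) z := hf.inv hz
  rw [hinv.sphDeriv_eq, hf.sphDeriv_eq, deriv_fun_inv'' hf.differentiableAt hz]
  have : ‖f z‖ ≠ 0 := norm_ne_zero_iff.2 hz
  simp only [norm_div, norm_neg, norm_pow, norm_inv]
  field_simp
  ring

theorem sphDeriv_const_mul (k z : ℂ) : sphDeriv (fun w => k * w) z = ‖k‖ / (1 + ‖k * z‖ ^ 2) := by
  have hk : AnalyticAt ℂ (fun w => k * w) z := by fun_prop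
  rw [hk.sphDeriv_eq]
  simp

theorem AnalyticAt.hasLaplacianAt_log_sphDeriv {h : ℂ → ℂ} {z : ℂ} (hh : AnalyticAt ℂ h z)
    (hd : deriv h z ≠ 0) :
    HasLaplacianAt (fun w => Real.log (sphDeriv h w)) (-4 * sphDeriv h z ^ 2) z := by
  have H := (hh.deriv.hasLaplacianAt_log_norm hd).sub hh.hasLaplacianAt_log_one_add_norm_sq
  rw [← hh.sphDeriv_eq, zero_sub, ← neg_mul] at H
  refine H.congr_of_eventuallyEq ?_
  filter_upwards [hh.eventually_analyticAt, hh.deriv.continuousAt.eventually_ne hd] with w hw hdw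
  rw [hw.sphDeriv_eq, Real.log_div (norm_ne_zero_iff.2 hdw) (by positivity)]

/-- `log h^#` solves the Liouville equation `Δu = -4 e^{2u}`. -/
theorem AnalyticAt.sphDeriv_le_of_isLocalMin {h g : ℂ → ℂ} {z : ℂ} (hh : AnalyticAt ℂ h z)
    (hg : AnalyticAt ℂ g z) (hh' : deriv h z ≠ 0) (hg' : deriv g z ≠ 0)
    (hmin : IsLocalMin (fun w => Real.log (sphDeriv h w) - Real.log (sphDeriv g w)) z) :
    sphDeriv h z ≤ sphDeriv g z := by
  have H := hmin.nonneg_of_hasLaplacianAt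
    ((hh.hasLaplacianAt_log_sphDeriv hh').sub (hg.hasLaplacianAt_log_sphDeriv hg'))
  exact (pow_le_pow_iff_left₀ (sphDeriv_nonneg h z) (sphDeriv_nonneg g z) two_ne_zero).1
    (by linarith)

theorem IsCompact.exists_touching {X : Type*} [TopologicalSpace X] {K : Set X} (hK : IsCompact K)
    {F : X → ℝ} (hF : ContinuousOn F K) {W : ℝ → X → ℝ} (hW : Continuous ↿W) {a b : ℝ}
    (hab : a ≤ b) (ha : ∀ x ∈ K, W a x < F x) (hb : ∃ x ∈ K, F x ≤ W b x) :
    ∃ k ∈ Ioc a b, ∃ x₀ ∈ K, F x₀ = W k x₀ ∧ ∀ x ∈ K, W k x ≤ F x := by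
  obtain ⟨x₁, hx₁, hFx₁⟩ := hb
  have hgap : ∀ k, ContinuousOn (fun x => F x - W k x) K := fun k =>
    hF.sub (hW.comp (Continuous.prodMk_right k)).continuousOn
  set m : ℝ → ℝ := fun k => sInf ((fun x => F x - W k x) '' K)
  have hm_attained : ∀ k, ∃ x ∈ K, m k = F x - W k x := fun k =>
    hK.exists_sInf_image_eq ⟨x₁, hx₁⟩ (hgap k)
  have hm_le : ∀ k, ∀ x ∈ K, m k ≤ F x - W k x := fun k x hx =>
    csInf_le (hK.bddBelow_image (hgap k)) (mem_image_of_mem _ hx)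
  have hm : Continuous m := by
    have hcont : Continuous fun p : ℝ × K => F p.2 - W p.1 p.2 :=
      (hF.domRestrict.comp continuous_snd).sub
        (hW.comp (continuous_fst.prodMk (continuous_subtype_val.comp continuous_snd)))
    have := (isCompact_iff_isCompact_univ.1 hK).continuous_sInf
      (f := fun k (x : K) => F x - W k x) hcont
    have himage : ∀ k, (fun x : K => F x - W k x) '' univ = (fun x => F x - W k x) '' K :=
      fun k => by ext; simp
    simpa only [himage] using this
  have hma : 0 < m a := by
    obtain ⟨x, hx, hmx⟩ := hm_attained a
    linarith [ha x hx]
  obtain ⟨k, hk, hmk⟩ : ∃ k ∈ Icc a b, m k = 0 :=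
    intermediate_value_Icc' hab hm.continuousOn ⟨by linarith [hm_le b x₁ hx₁], hma.le⟩
  obtain ⟨x₀, hx₀, hmx₀⟩ := hm_attained k
  refine ⟨k, ⟨hk.1.lt_of_ne ?_, hk.2⟩, x₀, hx₀, by linarith,
    fun x hx => by linarith [hm_le k x hx]⟩
  rintro rfl
  exact hma.ne' hmk

namespace MeromorphicNiceOn

variable {f : ℂ → ℂ} {D : Set ℂ} {z : ℂ}

/-- Near a pole, `f^#` is the spherical derivative of the analytic function `1 / f`. -/
theorem exists_analyticAt_sphDeriv_eventuallyEq (hf : MeromorphicNiceOn f D) (hz : z ∈ D) :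
    ∃ h : ℂ → ℂ, AnalyticAt ℂ h z ∧ sphDeriv f =ᶠ[𝓝 z] sphDeriv h := by
  by_cases hfz : AnalyticAt ℂ f z
  · exact ⟨f, hfz, .rfl⟩
  obtain ⟨-, hg⟩ := hf.2 z hz hfz
  refine ⟨fun w => (f w)⁻¹, hg, ?_⟩
  have hne : ∀ᶠ w in 𝓝[≠] z, (f w)⁻¹ ≠ 0 := by
    refine hg.eventually_eq_zero_or_eventually_ne_zero.resolve_left fun h0 => hfz ?_
    exact analyticAt_const.congr (h0.mono fun w hw => (inv_eq_zero.1 hw).symm)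
  filter_upwards [hg.eventually_analyticAt, eventually_nhdsWithin_iff.1 hne] with w hw hw'
  rcases eq_or_ne w z with rfl | hwz
  · simp only [sphDeriv, if_neg hfz, if_pos hg, inv_inv]
  · have hfw : AnalyticAt ℂ f w :=
      (hw.inv (hw' hwz)).congr (.of_forall fun v => by simp)
    exact (hfw.sphDeriv_inv (by simpa using hw' hwz)).symm

theorem continuousAt_sphDeriv (hf : MeromorphicNiceOn f D) (hz : z ∈ D) :
    ContinuousAt (sphDeriv f) z :=
  let ⟨_, hh, hfh⟩ := hf.exists_analyticAt_sphDeriv_eventuallyEq hz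
  hh.continuousAt_sphDeriv.congr hfh.symm

theorem sphDeriv_lt_mul_sphDeriv_of_eventually_le (hf : MeromorphicNiceOn f D)
    (hz : z ∈ D) {g : ℂ → ℂ} (hg : AnalyticAt ℂ g z) (hg' : deriv g z ≠ 0) {b : ℝ} (hb0 : 0 < b)
    (hb1 : b < 1) (hle : ∀ᶠ w in 𝓝 z, sphDeriv g w ≤ b * sphDeriv f w) :
    sphDeriv g z < b * sphDeriv f z := by
  obtain ⟨h, hh, hfh⟩ := hf.exists_analyticAt_sphDeriv_eventuallyEq hz
  by_contra! hge
  have hgz : 0 < sphDeriv g z := by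
    rw [hg.sphDeriv_eq]
    exact div_pos (norm_pos_iff.2 hg') (by positivity)
  have heq : sphDeriv g z = b * sphDeriv h z := by
    rw [← hfh.self_of_nhds]
    exact le_antisymm hle.self_of_nhds hge
  have hhz : 0 < sphDeriv h z := pos_of_mul_pos_right (heq ▸ hgz) hb0.le
  have hh' : deriv h z ≠ 0 := by
    intro h0
    rw [hh.sphDeriv_eq, h0, norm_zero, zero_div] at hhz
    exact hhz.false
  have hmin : IsLocalMin (fun w => Real.log (sphDeriv h w) - Real.log (sphDeriv g w)) z := by
    filter_upwards [hle, hfh, hg.continuousAt_sphDeriv.eventually (eventually_gt_nhds hgz)]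
      with w hw hfw hgw
    have hfw_pos : 0 < sphDeriv f w := pos_of_mul_pos_right (hgw.trans_le hw) hb0.le
    have hlog := Real.log_le_log hgw hw
    rw [Real.log_mul hb0.ne' hfw_pos.ne', hfw] at hlog
    rw [heq, Real.log_mul hb0.ne' hhz.ne']
    linarith
  have hle' := hh.sphDeriv_le_of_isLocalMin hg hh' hg' hmin
  nlinarith

theorem exists_mem_sphere_sphDeriv_le (hf : MeromorphicNiceOn f D) {t b : ℝ}
    (hK : closedBall (0 : ℂ) t ⊆ D) (ht : 0 < t)
    (hpos : ∀ z ∈ closedBall (0 : ℂ) t, 0 < sphDeriv f z) (hb0 : 0 < b) (hb1 : b < 1) :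
    ∃ z ∈ sphere (0 : ℂ) t, sphDeriv f z ≤ 1 / (2 * b * t) := by
  set W : ℝ → ℂ → ℝ := fun k z => sphDeriv (fun w => (k : ℂ) * w) z / b
  have hW_eq : ∀ k z, W k z = |k| / (1 + k ^ 2 * ‖z‖ ^ 2) / b := fun k z => by
    simp [W, sphDeriv_const_mul, mul_pow]
  have hW : Continuous ↿W := by
    have : ↿W = fun p : ℝ × ℂ => |p.1| / (1 + p.1 ^ 2 * ‖p.2‖ ^ 2) / b :=
      funext fun p => hW_eq p.1 p.2
    rw [this]
    exact ((continuous_abs.comp continuous_fst).div (by fun_prop) fun p => by positivity).div_const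
      b
  have h0 : (0 : ℂ) ∈ closedBall (0 : ℂ) t := mem_closedBall_self ht.le
  obtain ⟨k, ⟨hk0, -⟩, z₀, hz₀, heq, hle⟩ := (isCompact_closedBall (0 : ℂ) t).exists_touching
    (fun z hz => (hf.continuousAt_sphDeriv (hK hz)).continuousWithinAt) hW
    (mul_nonneg hb0.le (sphDeriv_nonneg f 0)) (fun z hz => by simpa [hW_eq] using hpos z hz)
    ⟨0, h0, by simp [hW_eq, abs_of_pos hb0, abs_of_nonneg (sphDeriv_nonneg f 0), hb0.ne']⟩
  have hz₀t : ‖z₀‖ = t := by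
    by_contra hne
    have hz₀' : z₀ ∈ ball (0 : ℂ) t :=
      mem_ball_zero_iff.2 ((mem_closedBall_zero_iff.1 hz₀).lt_of_ne hne)
    have hg : AnalyticAt ℂ (fun w => (k : ℂ) * w) z₀ := by fun_prop
    have hg' : deriv (fun w => (k : ℂ) * w) z₀ ≠ 0 := by simp [hk0.ne']
    have hlt := hf.sphDeriv_lt_mul_sphDeriv_of_eventually_le (hK hz₀) hg hg' hb0 hb1
      (eventually_of_mem (isOpen_ball.mem_nhds hz₀') fun w hw =>
        (div_le_iff₀' hb0).1 (hle w (ball_subset_closedBall hw)))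
    rw [heq] at hlt
    simp only [W] at hlt
    rw [mul_div_cancel₀ _ hb0.ne'] at hlt
    exact hlt.false
  refine ⟨z₀, mem_sphere_zero_iff_norm.2 hz₀t, ?_⟩
  rw [heq, hW_eq, hz₀t, abs_of_pos hk0, div_div, div_le_div_iff₀ (by positivity) (by positivity)]
  nlinarith [sq_nonneg (k * t - 1)]

end MeromorphicNiceOn

/-- Every function meromorphic on the unit disk satisfies
`inf_{z ∈ 𝔻} f^#(z) ≤ 1/2`. -/
theorem inf_sphDeriv_le_half (f : ℂ → ℂ)
    (hf : MeromorphicNiceOn f (ball (0 : ℂ) 1)) :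
    (⨅ z : ball (0 : ℂ) 1, sphDeriv f z) ≤ 1 / 2 := by
  set c := ⨅ z : ball (0 : ℂ) 1, sphDeriv f z
  have hlb : ∀ z ∈ ball (0 : ℂ) 1, c ≤ sphDeriv f z := fun z hz =>
    ciInf_le ⟨0, forall_mem_range.2 fun _ => sphDeriv_nonneg f _⟩ (⟨z, hz⟩ : ball (0 : ℂ) 1)
  rcases le_or_gt c 0 with hc | hc
  · linarith
  have hkey : ∀ t ∈ Ioo (0 : ℝ) 1, 2 * t * t * c ≤ 1 := by
    rintro t ⟨ht0, ht1⟩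
    have hK := closedBall_subset_ball (x := (0 : ℂ)) ht1
    obtain ⟨z, hz, hzle⟩ := hf.exists_mem_sphere_sphDeriv_le hK ht0
      (fun z hz => hc.trans_le (hlb z (hK hz))) ht0 ht1
    have hcz := hlb z (hK (sphere_subset_closedBall hz))
    rw [le_div_iff₀ (by positivity)] at hzle
    nlinarith
  have hlim : Tendsto (fun t : ℝ => 2 * t * t * c) (𝓝[<] 1) (𝓝 (2 * 1 * 1 * c)) :=
    ((by fun_prop : Continuous fun t : ℝ => 2 * t * t * c).tendsto 1).mono_left
      nhdsWithin_le_nhds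
  have := le_of_tendsto hlim (eventually_of_mem (Ioo_mem_nhdsLT zero_lt_one) hkey)
  linarith
end

section
/- Minimum principle for the spherical derivative: let f be meromorphic on the open unit disk 𝔻. If the spherical derivative f^# attains a local minimum at a point z₀ ∈ 𝔻, then f^#(z₀) = 0. -/
open Complex Metric Set Filter Topology
open scoped Classical

/-! Near `z₀` the spherical derivative of `f` is `g^# = |g'|/(1+|g|²)` for an analytic `g`
(either `f` or `1/f`). Post-composing `g` with the rotation `w ↦ (w - a)/(1 + āw)` of the Riemann
sphere, `a = g z₀`, changes neither `g^#` nor analyticity and moves the value at `z₀` to `0`. So we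
may assume `g z₀ = 0`; then `|g'(z₀)| = g^#(z₀) ≤ g^#(z) ≤ |g'(z)|` near `z₀`, and the minimum
modulus principle for `g'` gives either `g'(z₀) = 0` or `|g'| ≡ |g'(z₀)|` near `z₀`. In the latter
case `g^#(z₀) ≤ g^#(z)` forces `g ≡ 0` near `z₀`, so again `g'(z₀) = 0`. -/

open ComplexConjugate

noncomputable def finiteSphDeriv (g : ℂ → ℂ) (z : ℂ) : ℝ :=
  ‖deriv g z‖ / (1 + ‖g z‖ ^ 2)

lemma finiteSphDeriv_inv {g : ℂ → ℂ} {z : ℂ} (hg : DifferentiableAt ℂ g z) (hz : g z ≠ 0) :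
    finiteSphDeriv (fun w => (g w)⁻¹) z = finiteSphDeriv g z := by
  rw [finiteSphDeriv, finiteSphDeriv, show (fun w => (g w)⁻¹) = g⁻¹ from rfl, deriv_inv'' hg hz,
    norm_div, norm_neg, norm_pow, norm_inv]
  field_simp
  ring

noncomputable def sphereRotation (a w : ℂ) : ℂ :=
  (w - a) / (1 + conj a * w)

lemma one_add_conj_mul_self (a : ℂ) : 1 + conj a * a = ((1 + ‖a‖ ^ 2 : ℝ) : ℂ) := by
  push_cast
  rw [conj_mul']

lemma one_add_conj_mul_self_ne_zero (a : ℂ) : 1 + conj a * a ≠ 0 := by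
  rw [one_add_conj_mul_self]
  exact_mod_cast (by positivity : (1 + ‖a‖ ^ 2 : ℝ) ≠ 0)

lemma norm_one_add_conj_mul_sq_add_norm_sub_sq (a u : ℂ) :
    ‖1 + conj a * u‖ ^ 2 + ‖u - a‖ ^ 2 = (1 + ‖a‖ ^ 2) * (1 + ‖u‖ ^ 2) := by
  simp only [Complex.sq_norm, normSq_apply, add_re, add_im, mul_re, mul_im, conj_re, conj_im,
    sub_re, sub_im, one_re, one_im]
  ring

lemma hasDerivAt_sphereRotation (a : ℂ) {u : ℂ} (hu : 1 + conj a * u ≠ 0) :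
    HasDerivAt (sphereRotation a) ((1 + conj a * a) / (1 + conj a * u) ^ 2) u := by
  have h := ((hasDerivAt_id' u).sub_const a).div
    (((hasDerivAt_id' u).const_mul (conj a)).const_add 1) hu
  exact h.congr_deriv (by ring)

lemma finiteSphDeriv_sphereRotation (a : ℂ) {u : ℂ} (hu : 1 + conj a * u ≠ 0) :
    finiteSphDeriv (sphereRotation a) u = 1 / (1 + ‖u‖ ^ 2) := by
  have key := norm_one_add_conj_mul_sq_add_norm_sub_sq a u
  rw [finiteSphDeriv, (hasDerivAt_sphereRotation a hu).deriv, sphereRotation, norm_div, norm_div, norm_pow,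
    one_add_conj_mul_self, norm_real, Real.norm_of_nonneg (by positivity)]
  field_simp
  linear_combination (-1) * key

lemma finiteSphDeriv_sphereRotation_comp (a : ℂ) {g : ℂ → ℂ} {z : ℂ}
    (hg : DifferentiableAt ℂ g z) (hz : 1 + conj a * g z ≠ 0) :
    finiteSphDeriv (sphereRotation a ∘ g) z = finiteSphDeriv g z := by
  have hrot := finiteSphDeriv_sphereRotation a hz
  rw [finiteSphDeriv] at hrot
  rw [finiteSphDeriv, finiteSphDeriv, deriv_comp z
    (hasDerivAt_sphereRotation a hz).differentiableAt hg, norm_mul, Function.comp_apply,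
    mul_comm, mul_div_assoc, hrot, mul_one_div]

lemma deriv_eq_zero_of_isLocalMin_finiteSphDeriv_of_eq_zero {h : ℂ → ℂ} {z₀ : ℂ}
    (hh : AnalyticAt ℂ h z₀) (h0 : h z₀ = 0) (hmin : IsLocalMin (finiteSphDeriv h) z₀) :
    deriv h z₀ = 0 := by
  have hsph : finiteSphDeriv h z₀ = ‖deriv h z₀‖ := by simp [finiteSphDeriv, h0]
  have hnorm : IsLocalMin (norm ∘ deriv h) z₀ := by
    filter_upwards [hmin] with z hz
    rw [hsph] at hz
    exact hz.trans (div_le_self (norm_nonneg _) (by simp))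
  have hd : ∀ᶠ z in 𝓝 z₀, DifferentiableAt ℂ (deriv h) z :=
    hh.deriv.eventually_analyticAt.mono fun _ hz => hz.differentiableAt
  by_contra hne
  have hconst := (Complex.eventually_eq_or_eq_zero_of_isLocalMin_norm hd hnorm).resolve_right hne
  -- `|h'(z₀)| ≤ |h'(z₀)| / (1 + |h z|²)` forces `h z = 0`
  have hzero : h =ᶠ[𝓝 z₀] fun _ => 0 := by
    filter_upwards [hmin, hconst] with z hz hc
    rw [hsph, finiteSphDeriv, hc, le_div_iff₀ (by positivity)] at hz
    have : ‖h z‖ ^ 2 ≤ 0 := by nlinarith [norm_pos_iff.mpr hne]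
    simpa using this
  exact hne (by simpa using hzero.deriv_eq)

lemma finiteSphDeriv_eq_zero_of_isLocalMin {g : ℂ → ℂ} {z₀ : ℂ} (hg : AnalyticAt ℂ g z₀)
    (hmin : IsLocalMin (finiteSphDeriv g) z₀) : finiteSphDeriv g z₀ = 0 := by
  set a := g z₀
  have ha : 1 + conj a * g z₀ ≠ 0 := one_add_conj_mul_self_ne_zero a
  have hden : ∀ᶠ z in 𝓝 z₀, 1 + conj a * g z ≠ 0 :=
    (continuousAt_const.add (continuousAt_const.mul hg.continuousAt)).eventually_ne ha
  have heq : finiteSphDeriv (sphereRotation a ∘ g) =ᶠ[𝓝 z₀] finiteSphDeriv g := by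
    filter_upwards [hg.eventually_analyticAt, hden] with z hz hz'
    exact finiteSphDeriv_sphereRotation_comp a hz.differentiableAt hz'
  have hrot : AnalyticAt ℂ (sphereRotation a ∘ g) z₀ :=
    (hg.sub analyticAt_const).div (analyticAt_const.add (analyticAt_const.mul hg)) ha
  have hderiv := deriv_eq_zero_of_isLocalMin_finiteSphDeriv_of_eq_zero hrot
    (by simp [sphereRotation, a]) (hmin.congr heq.symm)
  rw [← heq.eq_of_nhds, finiteSphDeriv, hderiv, norm_zero, zero_div]

lemma sphDeriv_eventuallyEq_of_analyticAt {f : ℂ → ℂ} {z₀ : ℂ} (hf : AnalyticAt ℂ f z₀) :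
    sphDeriv f =ᶠ[𝓝 z₀] finiteSphDeriv f := by
  filter_upwards [hf.eventually_analyticAt] with z hz
  rw [sphDeriv, if_pos hz, finiteSphDeriv]

lemma sphDeriv_eventuallyEq_of_not_analyticAt {f : ℂ → ℂ} {z₀ : ℂ} (hf : ¬ AnalyticAt ℂ f z₀)
    (hinv : AnalyticAt ℂ (fun w => (f w)⁻¹) z₀) :
    sphDeriv f =ᶠ[𝓝 z₀] finiteSphDeriv (fun w => (f w)⁻¹) := by
  have hne : ∀ᶠ z in 𝓝[≠] z₀, (f z)⁻¹ ≠ 0 := by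
    refine hinv.eventually_eq_zero_or_eventually_ne_zero.resolve_left fun h0 => hf ?_
    exact analyticAt_const.congr (h0.mono fun z hz => (inv_eq_zero.mp hz).symm)
  refine eventuallyEq_nhds_of_eventuallyEq_nhdsNE ?_ (by rw [sphDeriv, if_neg hf, finiteSphDeriv])
  filter_upwards [hne, eventually_nhdsWithin_of_eventually_nhds hinv.eventually_analyticAt]
    with z hz hza
  have hfz : AnalyticAt ℂ f z := by simpa [Pi.inv_def] using hza.inv hz
  rw [sphDeriv, if_pos hfz, ← finiteSphDeriv_inv hza.differentiableAt hz]
  simp only [finiteSphDeriv, inv_inv]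

/-- **Minimum principle for the spherical derivative.**
If `f` is meromorphic on the unit disk and `f^#` attains a local minimum at
`z₀ ∈ 𝔻`, then `f^#(z₀) = 0`. -/
theorem sphDeriv_eq_zero_of_isLocalMin (f : ℂ → ℂ)
    (hf : MeromorphicNiceOn f (ball (0 : ℂ) 1))
    (z₀ : ℂ) (hz₀ : z₀ ∈ ball (0 : ℂ) 1)
    (hmin : IsLocalMin (sphDeriv f) z₀) :
    sphDeriv f z₀ = 0 := by
  obtain ⟨g, hg, heq⟩ : ∃ g, AnalyticAt ℂ g z₀ ∧ sphDeriv f =ᶠ[𝓝 z₀] finiteSphDeriv g := by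
    by_cases hA : AnalyticAt ℂ f z₀
    · exact ⟨f, hA, sphDeriv_eventuallyEq_of_analyticAt hA⟩
    · have hinv := (hf.2 z₀ hz₀ hA).2
      exact ⟨_, hinv, sphDeriv_eventuallyEq_of_not_analyticAt hA hinv⟩
  rw [heq.eq_of_nhds]
  exact finiteSphDeriv_eq_zero_of_isLocalMin hg (hmin.congr heq)
end

section
/- Let g be meromorphic on the open unit disk 𝔻 with g(0) = 0 and with spherical derivative g^# nowhere vanishing on 𝔻. Then for every r ∈ (0,1) there exists a point z₀ with |z₀| = r such that g^#(z₀) ≤ 1/(2r). -/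
open Complex Metric Set Filter Topology
open scoped Classical

/-
Write `q = g / g'`. Near a pole of `g` this equals `-u / u'` with `u = 1 / g`, so `q` is holomorphic
on the disk because `g^#` never vanishes, and `q(0) = 0`, `|q'(0)| = 1` since `0` is a simple zero
or a simple pole of `g`. If `g^# > 1/(2r)` on `|z| = r`, then `2|g| ≤ 1 + |g|² < 2r|g'|` there, so
`|q(z)/z| < 1` on the circle while `q(z)/z` equals `q'(0)` of modulus `1` at the centre,
contradicting the maximum modulus principle.
-/

theorem Complex.norm_lt_of_forall_mem_frontier_norm_lt {E F : Type*} [NormedAddCommGroup E]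
    [NormedSpace ℂ E] [Nontrivial E] [FiniteDimensional ℂ E] [NormedAddCommGroup F]
    [NormedSpace ℂ F] {f : E → F} {U : Set E} (hU : Bornology.IsBounded U) (hne : U.Nonempty)
    (hd : DiffContOnCl ℂ f U) {C : ℝ} (hC : ∀ z ∈ frontier U, ‖f z‖ < C) {w : E}
    (hw : w ∈ closure U) : ‖f w‖ < C := by
  obtain ⟨z, hz, hmax⟩ := Complex.exists_mem_frontier_isMaxOn_norm hU hne hd
  exact (hmax hw).trans_lt (hC z hz)

-- Thanks to `0⁻¹ = 0` this holds also at zeros of `u`, i.e. at the poles of `1 / u`.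
lemma div_deriv_inv_eq {u : ℂ → ℂ} {w : ℂ} (hu : DifferentiableAt ℂ u w) :
    (u w)⁻¹ / deriv (fun x => (u x)⁻¹) w = -(u w / deriv u w) := by
  rcases eq_or_ne (u w) 0 with h | h
  · simp [h]
  · rw [deriv_fun_inv'' hu h]
    field_simp

lemma hasDerivAt_div_deriv_of_eq_zero {v : ℂ → ℂ} {z : ℂ} (hv : AnalyticAt ℂ v z)
    (hz : v z = 0) (hd : deriv v z ≠ 0) :
    HasDerivAt (fun w => v w / deriv v w) 1 z := by
  refine (hv.differentiableAt.hasDerivAt.fun_div hv.deriv.differentiableAt.hasDerivAt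
    hd).congr_deriv ?_
  rw [hz, zero_mul, sub_zero]
  field_simp

lemma sphDeriv_of_analyticAt {f : ℂ → ℂ} {z : ℂ} (h : AnalyticAt ℂ f z) :
    sphDeriv f z = ‖deriv f z‖ / (1 + ‖f z‖ ^ 2) := if_pos h

lemma sphDeriv_of_not_analyticAt {f : ℂ → ℂ} {z : ℂ} (h : ¬ AnalyticAt ℂ f z) :
    sphDeriv f z = ‖deriv (fun w => (f w)⁻¹) z‖ / (1 + ‖(f z)⁻¹‖ ^ 2) := if_neg h

section

variable {f : ℂ → ℂ} {D : Set ℂ} {z : ℂ}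

lemma deriv_ne_zero_of_sphDeriv_ne_zero (h : sphDeriv f z ≠ 0) (ha : AnalyticAt ℂ f z) :
    deriv f z ≠ 0 := fun hd => h (by rw [sphDeriv_of_analyticAt ha, hd, norm_zero, zero_div])

lemma deriv_inv_ne_zero_of_sphDeriv_ne_zero (h : sphDeriv f z ≠ 0) (ha : ¬ AnalyticAt ℂ f z) :
    deriv (fun w => (f w)⁻¹) z ≠ 0 := fun hd =>
  h (by rw [sphDeriv_of_not_analyticAt ha, hd, norm_zero, zero_div])

lemma div_deriv_eventuallyEq_of_analyticAt_inv (hu : AnalyticAt ℂ (fun w => (f w)⁻¹) z) :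
    (fun w => f w / deriv f w) =ᶠ[𝓝 z] fun w => -((f w)⁻¹ / deriv (fun x => (f x)⁻¹) w) := by
  filter_upwards [hu.eventually_analyticAt] with w hw
  simpa only [inv_inv] using div_deriv_inv_eq hw.differentiableAt

lemma analyticAt_div_deriv (hf : MeromorphicNiceOn f D) (hz : z ∈ D) (hnv : sphDeriv f z ≠ 0) :
    AnalyticAt ℂ (fun w => f w / deriv f w) z := by
  by_cases ha : AnalyticAt ℂ f z
  · exact ha.div ha.deriv (deriv_ne_zero_of_sphDeriv_ne_zero hnv ha)
  · have hu := (hf.2 z hz ha).2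
    exact (hu.div hu.deriv (deriv_inv_ne_zero_of_sphDeriv_ne_zero hnv ha)).neg.congr
      (div_deriv_eventuallyEq_of_analyticAt_inv hu).symm

lemma norm_deriv_div_deriv_of_eq_zero (hf : MeromorphicNiceOn f D) (hz : z ∈ D)
    (hnv : sphDeriv f z ≠ 0) (hz0 : f z = 0) :
    ‖deriv (fun w => f w / deriv f w) z‖ = 1 := by
  by_cases ha : AnalyticAt ℂ f z
  · rw [(hasDerivAt_div_deriv_of_eq_zero ha hz0
      (deriv_ne_zero_of_sphDeriv_ne_zero hnv ha)).deriv, norm_one]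
  · have hu := (hf.2 z hz ha).2
    have hu0 : (f z)⁻¹ = 0 := by rw [hz0, inv_zero]
    rw [(div_deriv_eventuallyEq_of_analyticAt_inv hu).deriv_eq, deriv.fun_neg,
      (hasDerivAt_div_deriv_of_eq_zero hu hu0
        (deriv_inv_ne_zero_of_sphDeriv_ne_zero hnv ha)).deriv, norm_neg, norm_one]

lemma norm_div_deriv_lt_of_lt_sphDeriv (hf : MeromorphicNiceOn f D) (hz : z ∈ D) {r : ℝ}
    (hr : 0 < r) (hlt : 1 / (2 * r) < sphDeriv f z) : ‖f z / deriv f z‖ < r := by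
  by_cases ha : AnalyticAt ℂ f z
  · rw [sphDeriv_of_analyticAt ha, div_lt_div_iff₀ (by positivity) (by positivity)] at hlt
    have hd : 0 < ‖deriv f z‖ := by nlinarith [sq_nonneg ‖f z‖]
    rw [norm_div, div_lt_iff₀ hd]
    nlinarith [sq_nonneg (‖f z‖ - 1)]
  · rw [(hf.2 z hz ha).1, zero_div, norm_zero]
    exact hr

end

/-- If `g` is meromorphic on `𝔻` with `g(0) = 0` and nowhere
vanishing spherical derivative, then on every circle `|z| = r` (`0 < r < 1`)
there is a point `z₀` with `g^#(z₀) ≤ 1/(2r)`. -/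
theorem exists_sphDeriv_le_on_circle (g : ℂ → ℂ)
    (hg : MeromorphicNiceOn g (ball (0 : ℂ) 1)) (h0 : g 0 = 0)
    (hnv : ∀ z ∈ ball (0 : ℂ) 1, sphDeriv g z ≠ 0)
    (r : ℝ) (hr : r ∈ Set.Ioo (0 : ℝ) 1) :
    ∃ z₀ : ℂ, ‖z₀‖ = r ∧ sphDeriv g z₀ ≤ 1 / (2 * r) := by
  by_contra! hcon
  obtain ⟨hr0, hr1⟩ := hr
  set q : ℂ → ℂ := fun z => g z / deriv g z
  have hq : DifferentiableOn ℂ q (ball 0 1) := fun z hz =>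
    (analyticAt_div_deriv hg hz (hnv z hz)).differentiableAt.differentiableWithinAt
  have hq0 : q 0 = 0 := by simp only [q, h0, zero_div]
  have hH : DiffContOnCl ℂ (dslope q 0) (ball 0 r) :=
    ((differentiableOn_dslope (ball_mem_nhds 0 one_pos)).2 hq).diffContOnCl_ball
      (closedBall_subset_ball hr1)
  have hcircle : ∀ z ∈ frontier (ball (0 : ℂ) r), ‖dslope q 0 z‖ < 1 := by
    intro z hz
    rw [frontier_ball 0 hr0.ne', mem_sphere_zero_iff_norm] at hz
    have hz0 : z ≠ 0 := norm_pos_iff.1 (hz ▸ hr0)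
    rw [dslope_of_ne _ hz0, slope_def_field, hq0, sub_zero, sub_zero, norm_div, hz,
      div_lt_one hr0]
    exact norm_div_deriv_lt_of_lt_sphDeriv hg (mem_ball_zero_iff.2 (hz ▸ hr1)) hr0 (hcon z hz)
  have hcentre := Complex.norm_lt_of_forall_mem_frontier_norm_lt isBounded_ball
    (nonempty_ball.2 hr0) hH hcircle (subset_closure (mem_ball_self hr0))
  rw [dslope_same, norm_deriv_div_deriv_of_eq_zero hg (mem_ball_self one_pos)
    (hnv 0 (mem_ball_self one_pos)) h0] at hcentre
  exact lt_irrefl 1 hcentre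
end

section
/- Let 0 < ρ < r, suppose (r+ρ)/(r−ρ) < 2, and let ε > 0. Let f be holomorphic on the open disk U_r(0) = {z : |z| < r} with |f'(z)| ≥ 1 and f^#(z) ≥ ε for all z ∈ U_r(0). Then max_{|z| ≤ ρ} |f(z)| ≤ ( (1/ε) · (1/ρ)^{(r+ρ)/(r−ρ)} )^{1/(2 − (r+ρ)/(r−ρ))}. -/
open Complex Metric Set Filter Topology
open scoped Classical

/-!
Let `M = ‖f z₀‖` be the maximum of `‖f‖` on the closed disc of radius `ρ`, and
`α = (r + ρ) / (r - ρ)`. Cauchy's estimate gives `‖f' 0‖ ≤ M / ρ`. Since `‖f'‖ ≥ 1`, the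
function `log ‖f'‖` is harmonic and nonnegative on the disc of radius `r`, so Harnack's
inequality (from the Poisson formula) gives `‖f' z₀‖ ≤ ‖f' 0‖ ^ α`. Together with
`ε (1 + M²) ≤ ‖f' z₀‖` this yields `ε M² ≤ (M / ρ) ^ α`, and `α < 2` lets us solve for `M`.
-/

open InnerProductSpace

theorem InnerProductSpace.HarmonicOnNhd.harnack_closedBall {f : ℂ → ℝ} {c w : ℂ} {R : ℝ}
    (hf : HarmonicOnNhd f (closedBall c R)) (hf₀ : ∀ z ∈ sphere c R, 0 ≤ f z)
    (hw : w ∈ ball c R) :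
    f w ≤ (R + ‖w - c‖) / (R - ‖w - c‖) * f c := by
  have hR : |R| = R := abs_of_pos (pos_of_mem_ball hw)
  have hfc : ContinuousOn f (sphere c |R|) :=
    hf.continuousOn.mono (by rw [hR]; exact sphere_subset_closedBall)
  calc f w = Real.circleAverage (poissonKernel c w • f) c R :=
        (hf.circleAverage_poissonKernel_smul hw).symm
    _ ≤ Real.circleAverage (((R + ‖w - c‖) / (R - ‖w - c‖)) • f) c R := by
        refine Real.circleAverage_mono ?_ hfc.circleIntegrable'.const_smul fun z hz => ?_
        · refine ContinuousOn.circleIntegrable' (ContinuousOn.smul ?_ hfc)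
          rw [poissonKernel_eq_re_herglotzRieszKernel]
          exact continuous_re.comp_continuousOn (continuousOn_herglotzRieszKernel_sphere hw)
        · rw [hR] at hz
          show poissonKernel c w z * f z ≤ (R + ‖w - c‖) / (R - ‖w - c‖) * f z
          rw [poissonKernel_eq_re_herglotzRieszKernel]
          exact mul_le_mul_of_nonneg_right (re_herglotzRieszKernel_le hz hw) (hf₀ z hz)
    _ = (R + ‖w - c‖) / (R - ‖w - c‖) * f c := by
        have hf' : HarmonicOnNhd f (closedBall c |R|) := by rwa [hR]
        rw [Real.circleAverage_smul, hf'.circleAverage_eq, smul_eq_mul]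

theorem InnerProductSpace.HarmonicOnNhd.harnack_ball {f : ℂ → ℝ} {c w : ℂ} {r : ℝ}
    (hf : HarmonicOnNhd f (ball c r)) (hf₀ : ∀ z ∈ ball c r, 0 ≤ f z) (hw : w ∈ ball c r) :
    f w ≤ (r + ‖w - c‖) / (r - ‖w - c‖) * f c := by
  have hwr : ‖w - c‖ < r := mem_ball_iff_norm.mp hw
  have hlim : Tendsto (fun R => (R + ‖w - c‖) / (R - ‖w - c‖) * f c) (𝓝[<] r)
      (𝓝 ((r + ‖w - c‖) / (r - ‖w - c‖) * f c)) := by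
    refine (ContinuousAt.tendsto ?_).mono_left nhdsWithin_le_nhds
    exact ((continuousAt_id.add continuousAt_const).div (continuousAt_id.sub continuousAt_const)
      (sub_ne_zero.mpr hwr.ne')).mul continuousAt_const
  refine ge_of_tendsto hlim (eventually_of_mem (Ioo_mem_nhdsLT hwr) fun R hR => ?_)
  have hRr : closedBall c R ⊆ ball c r := closedBall_subset_ball hR.2
  exact (hf.mono hRr).harnack_closedBall
    (fun z hz => hf₀ z (hRr (sphere_subset_closedBall hz))) (mem_ball_iff_norm.mpr hR.1)

theorem DifferentiableOn.norm_le_norm_center_rpow_of_one_le_norm {u : ℂ → ℂ} {c w : ℂ} {ρ r : ℝ}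
    (hu : DifferentiableOn ℂ u (ball c r)) (hu₁ : ∀ z ∈ ball c r, 1 ≤ ‖u z‖) (hρr : ρ < r)
    (hw : w ∈ closedBall c ρ) :
    ‖u w‖ ≤ ‖u c‖ ^ ((r + ρ) / (r - ρ)) := by
  have hw' : w ∈ ball c r := closedBall_subset_ball hρr hw
  have hc : c ∈ ball c r := mem_ball_self (pos_of_mem_ball hw')
  have hpos : ∀ z ∈ ball c r, 0 < ‖u z‖ := fun z hz => one_pos.trans_le (hu₁ z hz)
  have hharm : HarmonicOnNhd (fun z => Real.log ‖u z‖) (ball c r) := fun z hz =>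
    (hu.analyticAt (isOpen_ball.mem_nhds hz)).harmonicAt_log_norm (norm_pos_iff.mp (hpos z hz))
  have hharnack := hharm.harnack_ball (fun z hz => Real.log_nonneg (hu₁ z hz)) hw'
  have hexponent : (r + ‖w - c‖) / (r - ‖w - c‖) ≤ (r + ρ) / (r - ρ) := by
    have hwρ : ‖w - c‖ ≤ ρ := mem_closedBall_iff_norm.mp hw
    have hrρ : 0 < r - ρ := sub_pos.mpr hρr
    have hrρ' : 0 ≤ r + ρ := by linarith [norm_nonneg (w - c)]
    gcongr
  calc ‖u w‖ = Real.exp (Real.log ‖u w‖) := (Real.exp_log (hpos w hw')).symm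
    _ ≤ Real.exp (Real.log ‖u c‖ * ((r + ρ) / (r - ρ))) := by
        gcongr
        rw [mul_comm]
        exact hharnack.trans (mul_le_mul_of_nonneg_right hexponent (Real.log_nonneg (hu₁ c hc)))
    _ = ‖u c‖ ^ ((r + ρ) / (r - ρ)) := (Real.rpow_def_of_pos (hpos c hc) _).symm

theorem le_rpow_one_div_of_mul_sq_le_div_rpow {ε ρ α M : ℝ} (hε : 0 < ε) (hρ : 0 < ρ)
    (hα : α < 2) (hM : 0 < M) (h : ε * M ^ 2 ≤ (M / ρ) ^ α) :
    M ≤ ((1 / ε) * (1 / ρ) ^ α) ^ (1 / (2 - α)) := by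
  have hpow : M ^ (2 - α) ≤ (1 / ε) * (1 / ρ) ^ α := by
    rw [Real.div_rpow hM.le hρ.le] at h
    rw [Real.rpow_sub hM, Real.rpow_two, Real.div_rpow zero_le_one hρ.le, Real.one_rpow,
      div_le_iff₀ (Real.rpow_pos_of_pos hM α)]
    rw [le_div_iff₀ (Real.rpow_pos_of_pos hρ α)] at h
    field_simp
    linarith
  calc M = (M ^ (2 - α)) ^ (1 / (2 - α)) := by
        rw [one_div, Real.rpow_rpow_inv hM.le (by linarith)]
    _ ≤ ((1 / ε) * (1 / ρ) ^ α) ^ (1 / (2 - α)) := by gcongr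

theorem mul_one_add_sq_le_norm_deriv_of_le_sphDeriv {f : ℂ → ℂ} {z : ℂ} {ε : ℝ}
    (hf : AnalyticAt ℂ f z) (h : ε ≤ sphDeriv f z) : ε * (1 + ‖f z‖ ^ 2) ≤ ‖deriv f z‖ := by
  rwa [sphDeriv, if_pos hf, le_div_iff₀ (by positivity)] at h

/-- Let `0 < ρ < r` with `(r+ρ)/(r-ρ) < 2` and `ε > 0`.  If `f`
is holomorphic on `U_r(0)` with `|f'| ≥ 1` and `f^# ≥ ε` there, then
`max_{|z| ≤ ρ} |f(z)| ≤ ((1/ε)·(1/ρ)^{(r+ρ)/(r-ρ)})^{1/(2-(r+ρ)/(r-ρ))}`. -/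
theorem max_modulus_bound (ρ r ε : ℝ) (hρ : 0 < ρ) (hρr : ρ < r)
    (hquot : (r + ρ) / (r - ρ) < 2) (hε : 0 < ε)
    (f : ℂ → ℂ) (hf : DifferentiableOn ℂ f (ball (0 : ℂ) r))
    (hf' : ∀ z ∈ ball (0 : ℂ) r, 1 ≤ ‖deriv f z‖)
    (hsph : ∀ z ∈ ball (0 : ℂ) r, ε ≤ sphDeriv f z) :
    ∀ z ∈ closedBall (0 : ℂ) ρ,
      ‖f z‖ ≤ ((1 / ε) * (1 / ρ) ^ ((r + ρ) / (r - ρ))) ^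
        (1 / (2 - (r + ρ) / (r - ρ))) := by
  intro z hz
  have hsub : closedBall (0 : ℂ) ρ ⊆ ball 0 r := closedBall_subset_ball hρr
  obtain ⟨z₀, hz₀, hmax⟩ := (isCompact_closedBall (0 : ℂ) ρ).exists_isMaxOn
    ⟨z, hz⟩ (hf.continuousOn.mono hsub).norm
  have hcauchy : ‖deriv f 0‖ ≤ ‖f z₀‖ / ρ :=
    norm_deriv_le_of_forall_mem_sphere_norm_le hρ (hf.diffContOnCl_ball hsub)
      fun w hw => hmax (sphere_subset_closedBall hw)
  have hM : 0 < ‖f z₀‖ := (div_pos_iff_of_pos_right hρ).mp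
    (one_pos.trans_le ((hf' 0 (mem_ball_self (hρ.trans hρr))).trans hcauchy))
  have hderiv : DifferentiableOn ℂ (deriv f) (ball 0 r) :=
    (hf.analyticOnNhd isOpen_ball).deriv.differentiableOn
  have hz₀' : z₀ ∈ ball (0 : ℂ) r := hsub hz₀
  refine (hmax hz).trans (le_rpow_one_div_of_mul_sq_le_div_rpow hε hρ hquot hM ?_)
  calc ε * ‖f z₀‖ ^ 2 ≤ ε * (1 + ‖f z₀‖ ^ 2) := by gcongr; linarith
    _ ≤ ‖deriv f z₀‖ := mul_one_add_sq_le_norm_deriv_of_le_sphDeriv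
        (hf.analyticAt (isOpen_ball.mem_nhds hz₀')) (hsph z₀ hz₀')
    _ ≤ ‖deriv f 0‖ ^ ((r + ρ) / (r - ρ)) :=
        hderiv.norm_le_norm_center_rpow_of_one_le_norm hf' hρr hz₀
    _ ≤ (‖f z₀‖ / ρ) ^ ((r + ρ) / (r - ρ)) :=
        Real.rpow_le_rpow (norm_nonneg _) hcauchy (div_nonneg (by linarith) (by linarith))
end

section
/- Let ε > 0 and let f be holomorphic on the open unit disk 𝔻 with f^#(z) ≥ ε for all z ∈ 𝔻. Then for every r ∈ (0,1), the Nevanlinna characteristic of f satisfies T(r,f) = m(r,f) ≤ m(r, f'/f) + log⁺(1/ε), where m(r,h) = (1/2π)∫₀^{2π} log⁺|h(r e^{iθ})| dθ is the Nevanlinna proximity function and log⁺ t = max(log t, 0). -/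
open Complex Metric Set Filter Topology
open scoped Classical

/-- `log⁺ t = max (log t) 0`. -/
noncomputable def posLog (t : ℝ) : ℝ := max (Real.log t) 0

/-- The Nevanlinna proximity function
`m(r,h) = (1/2π) ∫₀^{2π} log⁺ |h(r e^{iθ})| dθ`. -/
noncomputable def proximity (h : ℂ → ℂ) (r : ℝ) : ℝ :=
  (2 * Real.pi)⁻¹ *
    ∫ θ in (0 : ℝ)..(2 * Real.pi), posLog ‖h ((r : ℂ) * Complex.exp ((θ : ℂ) * Complex.I))‖

/-- The Nevanlinna characteristic of a function holomorphic on `𝔻`: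
`T(r,f) = m(r,f)` (the counting function of poles vanishes). -/
noncomputable def nevanlinnaT (f : ℂ → ℂ) (r : ℝ) : ℝ := proximity f r

/-! The inequality `ε (1 + |f|²) ≤ |f'|` gives `ε |f| ≤ |f'/f|` wherever `|f| > 1`, hence
`log⁺ |f| ≤ log⁺ |f'/f| + log⁺ (1/ε)` pointwise; averaging over the circle `|z| = r` yields the
claim. The average of `log⁺ |f'/f|` is finite because `f'/f` is meromorphic on the disk. -/

theorem posLog_eq_real_posLog : posLog = Real.posLog :=
  funext fun _ => max_comm _ _

theorem proximity_eq_circleAverage (h : ℂ → ℂ) (r : ℝ) :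
    proximity h r = Real.circleAverage (fun z => Real.posLog ‖h z‖) 0 r := by
  simp only [proximity, Real.circleAverage_def, circleMap_zero, posLog_eq_real_posLog,
    smul_eq_mul]

theorem le_sphDeriv_iff {f : ℂ → ℂ} {z : ℂ} (hf : AnalyticAt ℂ f z) {ε : ℝ} :
    ε ≤ sphDeriv f z ↔ ε * (1 + ‖f z‖ ^ 2) ≤ ‖deriv f z‖ := by
  rw [sphDeriv, if_pos hf, le_div_iff₀ (by positivity)]

theorem posLog_norm_le_posLog_norm_div_add {a b : ℂ} {ε : ℝ} (hε : 0 < ε)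
    (h : ε * ‖a‖ ^ 2 ≤ ‖b‖) :
    Real.posLog ‖a‖ ≤ Real.posLog ‖b / a‖ + Real.posLog (1 / ε) := by
  rcases le_or_gt ‖a‖ 1 with ha | ha
  · rw [(Real.posLog_eq_zero_iff _).2 (by rwa [abs_norm])]
    exact add_nonneg Real.posLog_nonneg Real.posLog_nonneg
  have hle : ‖a‖ ≤ ‖b / a‖ * (1 / ε) := by
    rw [norm_div, div_mul_div_comm, mul_one, le_div_iff₀ (by positivity)]
    nlinarith
  exact (Real.posLog_le_posLog (norm_nonneg a) hle).trans Real.posLog_mul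

/-- If `f` is holomorphic on `𝔻` with `f^# ≥ ε` everywhere, then
for all `0 < r < 1`:  `T(r,f) = m(r,f) ≤ m(r, f'/f) + log⁺(1/ε)`. -/
theorem nevanlinnaT_le (ε : ℝ) (hε : 0 < ε) (f : ℂ → ℂ)
    (hf : DifferentiableOn ℂ f (ball (0 : ℂ) 1))
    (hsph : ∀ z ∈ ball (0 : ℂ) 1, ε ≤ sphDeriv f z)
    (r : ℝ) (hr : r ∈ Set.Ioo (0 : ℝ) 1) :
    nevanlinnaT f r = proximity f r ∧
      nevanlinnaT f r ≤ proximity (fun z => deriv f z / f z) r + posLog (1 / ε) := by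
  refine ⟨rfl, ?_⟩
  have hsphere : sphere (0 : ℂ) |r| ⊆ ball 0 1 := by
    rw [abs_of_pos hr.1]
    exact sphere_subset_ball hr.2
  have hfa : AnalyticOnNhd ℂ f (ball 0 1) := hf.analyticOnNhd isOpen_ball
  have hint_f : CircleIntegrable (fun z => Real.posLog ‖f z‖) 0 r :=
    (hfa.meromorphicOn.mono_set hsphere).circleIntegrable_posLog_norm
  have hint_logDeriv : CircleIntegrable (fun z => Real.posLog ‖deriv f z / f z‖) 0 r :=
    ((hfa.deriv.meromorphicOn.div hfa.meromorphicOn).mono_set hsphere).circleIntegrable_posLog_norm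
  rw [nevanlinnaT, proximity_eq_circleAverage, proximity_eq_circleAverage, posLog_eq_real_posLog,
    ← Real.circleAverage_const (Real.posLog (1 / ε)) 0 r,
    ← Real.circleAverage_fun_add hint_logDeriv (circleIntegrable_const _ _ _)]
  refine Real.circleAverage_mono hint_f (hint_logDeriv.add (circleIntegrable_const _ _ _)) ?_
  intro z hz
  have hderiv := (le_sphDeriv_iff (hfa z (hsphere hz))).1 (hsph z (hsphere hz))
  exact posLog_norm_le_posLog_norm_div_add hε (by linarith)
end
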